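/- arXiv:2307.13498 — 3 statements merged into one kernel-verified Lean document; each statement's English description precedes it below -/
import Mathlib

section
/- Let q ∈ ℂ[z_1,…,z_n] be an irreducible Lee-Yang polynomial, let ℓ ∈ ℝ^n have positive, ℚ-linearly independent entries, and let Δ > 0. If q(z_1,…,z_n) = q(e^{iΔℓ_1}z_1,…,e^{iΔℓ_n}z_n) for all z ∈ ℂ^n, then q is a binomial, i.e. q has exactly two monomials with nonzero coefficients. -/
open MeasureTheory Filter Topology

noncomputable section

/-- A polynomial `p ∈ ℂ[z_1,…,z_n]` is Lee-Yang if it has no zeros in `𝔻^n`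
(all coordinates of absolute value `< 1`) and no zeros in `(ℂ ∖ cl 𝔻)^n`
(all coordinates of absolute value `> 1`). -/
def LeeYang {n : ℕ} (p : MvPolynomial (Fin n) ℂ) : Prop :=
  (∀ z : Fin n → ℂ, (∀ j, ‖z j‖ < 1) → MvPolynomial.eval z p ≠ 0) ∧
  (∀ z : Fin n → ℂ, (∀ j, 1 < ‖z j‖) → MvPolynomial.eval z p ≠ 0)

/-- The entire function `f_{p,ℓ}(x) = p(e^{ixℓ_1},…,e^{ixℓ_n})`. -/
def fpl {n : ℕ} (p : MvPolynomial (Fin n) ℂ) (ℓ : Fin n → ℝ) (x : ℂ) : ℂ :=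
  MvPolynomial.eval (fun j => Complex.exp (Complex.I * x * (ℓ j : ℂ))) p

/-- The multiplicity of `t` as a zero of `f_{p,ℓ}`: the least `k` such that the `k`-th
derivative of `f_{p,ℓ}` is nonzero at `t` (so `mult p ℓ t = 0` when `f_{p,ℓ}(t) ≠ 0`). -/
def mult {n : ℕ} (p : MvPolynomial (Fin n) ℂ) (ℓ : Fin n → ℝ) (t : ℝ) : ℕ :=
  sInf {k : ℕ | iteratedDeriv k (fpl p ℓ) (t : ℂ) ≠ 0}

/-- `x : ℤ → ℝ` is a nondecreasing bi-infinite enumeration of the zeros of `f_{p,ℓ}`,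
each zero repeated according to its multiplicity. -/
def IsZeroEnum {n : ℕ} (p : MvPolynomial (Fin n) ℂ) (ℓ : Fin n → ℝ) (x : ℤ → ℝ) : Prop :=
  Monotone x ∧
  ∀ t : ℝ, {j : ℤ | x j = t}.Finite ∧ {j : ℤ | x j = t}.ncard = mult p ℓ t

/-- `ρ` is the gap distribution of the nondecreasing sequence `x : ℤ → ℝ`: a Borel
probability measure such that for every bounded continuous `g : ℝ → ℝ`,
`(1/N) ∑_{j=1}^N g(x_{j+1} - x_j) → ∫ g dρ`. -/
def IsGapDist (x : ℤ → ℝ) (ρ : Measure ℝ) : Prop :=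
  IsProbabilityMeasure ρ ∧
  ∀ g : ℝ → ℝ, Continuous g → (∃ C : ℝ, ∀ t, |g t| ≤ C) →
    Tendsto (fun N : ℕ => (N : ℝ)⁻¹ * ∑ j ∈ Finset.Icc (1 : ℤ) (N : ℤ), g (x (j + 1) - x j))
      atTop (𝓝 (∫ t, g t ∂ρ))

/-!
Let `W(α) = ∑ⱼ αⱼ ℓⱼ` be the weight of an exponent `α`. The rotation invariance forces
`W(α) ∈ (2π/Δ)ℤ` on the support of `q`. Since `W` is injective on `ℤⁿ` (the `ℓⱼ` are
`ℚ`-linearly independent), the lattice vectors whose weight lies in `(2π/Δ)ℤ` form a cyclic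
group `ℤv`, so the support lies on a segment `α₀, α₀ + v, …, α₀ + Tv` with both ends attained.
Writing `v = a - b` with `a, b ∈ ℕⁿ`, the polynomial `X^{Tb} q` is `X^{α₀}` times a binary form
of degree `T` in `X^a, X^b`, which over `ℂ` factors into binomials `X^a - ρ X^b`. The prime `q`
divides one of these factors or `X^{α₀}`; but the weight spread `max W - min W` over the support
cannot increase from a divisor to a multiple, and it is `T W(v)` for `q` and at most `W(v)` for
the factors. Hence `T ≤ 1`, i.e. `q` has at most two monomials; the Lee-Yang property puts the
constant monomial in the support and irreducibility excludes `q` being constant.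
-/

open Function

namespace MvPolynomial

section Spread

variable {σ R Γ : Type*} [CommSemiring R] [NoZeroDivisors R]
  [AddCommGroup Γ] [LinearOrder Γ] [IsOrderedAddMonoid Γ] {F : (σ →₀ ℕ) →+ Γ}

theorem add_mem_support_mul_of_forall_le (hF : Injective F) {p s : MvPolynomial σ R}
    {a b : σ →₀ ℕ} (ha : a ∈ p.support) (ha_max : ∀ x ∈ p.support, F x ≤ F a)
    (hb : b ∈ s.support) (hb_max : ∀ y ∈ s.support, F y ≤ F b) :
    a + b ∈ (p * s).support := by
  classical
  rw [mem_support_iff, coeff_mul, Finset.sum_eq_single (a, b)]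
  · exact mul_ne_zero (mem_support_iff.mp ha) (mem_support_iff.mp hb)
  · rintro ⟨x, y⟩ hxy hne
    rw [Finset.HasAntidiagonal.mem_antidiagonal] at hxy
    by_contra hxy_ne
    have hx := ha_max x (mem_support_iff.mpr (left_ne_zero_of_mul hxy_ne))
    have hy := hb_max y (mem_support_iff.mpr (right_ne_zero_of_mul hxy_ne))
    have hsum : F x + F y = F a + F b := by rw [← map_add, ← map_add, hxy]
    have hx' : F x = F a := le_antisymm hx (by
      by_contra! h; exact (add_lt_add_of_lt_of_le h hy).ne hsum)
    have hy' : F y = F b := by rw [hx'] at hsum; exact add_left_cancel hsum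
    exact hne (Prod.ext (hF hx') (hF hy'))
  · simp

theorem le_add_of_dvd (hF : Injective F) {p r : MvPolynomial σ R} (hr : r ≠ 0) (hpr : p ∣ r)
    {B : Γ} (hB : ∀ y₁ ∈ r.support, ∀ y₂ ∈ r.support, F y₂ ≤ F y₁ + B)
    {x₁ x₂ : σ →₀ ℕ} (hx₁ : x₁ ∈ p.support) (hx₂ : x₂ ∈ p.support) :
    F x₂ ≤ F x₁ + B := by
  obtain ⟨s, rfl⟩ := hpr
  have hs : s.support.Nonempty := support_nonempty.mpr (right_ne_zero_of_mul hr)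
  obtain ⟨a, ha, ha_max⟩ := Finset.exists_max_image p.support F ⟨x₁, hx₁⟩
  obtain ⟨a', ha', ha'_min⟩ := Finset.exists_min_image p.support F ⟨x₁, hx₁⟩
  obtain ⟨b, hb, hb_max⟩ := Finset.exists_max_image s.support F hs
  obtain ⟨b', hb', hb'_min⟩ := Finset.exists_min_image s.support F hs
  have hmax := add_mem_support_mul_of_forall_le hF ha ha_max hb hb_max
  have hmin := add_mem_support_mul_of_forall_le (F := -F) (neg_injective.comp hF) ha'
    (fun x hx => neg_le_neg (ha'_min x hx)) hb' (fun y hy => neg_le_neg (hb'_min y hy))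
  have key := hB _ hmin _ hmax
  rw [map_add, map_add] at key
  refine le_of_add_le_add_right (a := F b') ?_
  calc F x₂ + F b' ≤ F a + F b := add_le_add (ha_max x₂ hx₂) (hb'_min b hb)
    _ ≤ F a' + F b' + B := key
    _ ≤ F x₁ + B + F b' := by
      rw [add_right_comm]; exact add_le_add_left (add_le_add_left (ha'_min x₁ hx₁) _) _

end Spread

theorem coeff_bind₁_C_mul_X {σ R : Type*} [CommSemiring R] (w : σ → R) (p : MvPolynomial σ R)
    (α : σ →₀ ℕ) :
    coeff α (bind₁ (fun k => C (w k) * X k) p) = (α.prod fun k n => w k ^ n) * coeff α p := by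
  classical
  induction p using MvPolynomial.induction_on' with
  | monomial β r =>
    rw [bind₁_monomial]
    simp only [mul_pow, Finset.prod_mul_distrib, ← map_pow, ← map_prod, ← mul_assoc, ← map_mul]
    rw [show (∏ k ∈ β.support, X k ^ β k : MvPolynomial σ R) = β.prod fun k n => X k ^ n from rfl,
      ← monomial_eq, coeff_monomial, coeff_monomial]
    split_ifs with hβ
    · rw [hβ, mul_comm]
      rfl
    · rw [mul_zero]
  | add p q hp hq => simp only [map_add, coeff_add, hp, hq, mul_add]

theorem prod_pow_eq_one_of_eval_mul_eq {σ R : Type*} [CommRing R] [IsDomain R] [Infinite R]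
    {w : σ → R} {p : MvPolynomial σ R} (h : ∀ z, eval z p = eval (fun k => w k * z k) p)
    {α : σ →₀ ℕ} (hα : α ∈ p.support) : (α.prod fun k n => w k ^ n) = 1 := by
  have hp : bind₁ (fun k => C (w k) * X k) p = p := funext fun z => by
    rw [h z]
    change aeval z (bind₁ _ p) = aeval _ p
    rw [aeval_bind₁]
    simp
  have hcoeff := congrArg (coeff α) hp
  rw [coeff_bind₁_C_mul_X] at hcoeff
  exact mul_right_cancel₀ (mem_support_iff.mp hα) (hcoeff.trans (one_mul _).symm)

end MvPolynomial

namespace Polynomial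

theorem homogenize_multiset_prod_X_sub_C {R : Type*} [CommRing R] (M : Multiset R) :
    homogenize (M.map (X - C ·)).prod (Multiset.card M) =
      (M.map fun ρ => .X 0 - .C ρ * .X 1).prod := by
  induction M using Multiset.induction_on with
  | empty => simp
  | cons ρ M ih =>
    have hdeg : (M.map (X - C ·)).prod.natDegree ≤ Multiset.card M :=
      calc _ ≤ ((M.map (X - C ·)).map natDegree).sum := natDegree_multiset_prod_le _
        _ ≤ (M.map fun _ => 1).sum := by
          rw [Multiset.map_map]
          exact Multiset.sum_map_le_sum_map _ _ fun ρ _ => natDegree_X_sub_C_le ρ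
        _ = Multiset.card M := by simp
    rw [Multiset.map_cons, Multiset.prod_cons, Multiset.card_cons, add_comm,
      homogenize_mul _ _ (natDegree_X_sub_C_le ρ) hdeg, ih, Multiset.map_cons, Multiset.prod_cons]
    simp

theorem Splits.homogenize_natDegree_eq_prod_roots {K : Type*} [Field K] {f : K[X]}
    (hf : f.Splits) :
    homogenize f f.natDegree =
      .C f.leadingCoeff * (f.roots.map fun ρ => .X 0 - .C ρ * .X 1).prod := by
  rw [hf.natDegree_eq_card_roots]
  conv_lhs => arg 1; rw [hf.eq_prod_roots]
  rw [homogenize_C_mul, homogenize_multiset_prod_X_sub_C]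

theorem natDegree_sum_monomial_eq {ι R : Type*} [Semiring R] {S : Finset ι}
    {τ : ι → ℕ} {c : ι → R} {T : ℕ} {i₀ : ι} (hi₀ : i₀ ∈ S) (hc : c i₀ ≠ 0)
    (hτ : ∀ i ∈ S, τ i ≤ T) (hT : ∀ i ∈ S, τ i = T → i = i₀) (hτi₀ : τ i₀ = T) :
    (∑ i ∈ S, monomial (τ i) (c i)).natDegree = T := by
  classical
  refine natDegree_eq_of_le_of_coeff_ne_zero
    (natDegree_sum_le_of_forall_le _ _ fun i hi => (natDegree_monomial_le _).trans (hτ i hi)) ?_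
  rw [finsetSum_coeff, Finset.sum_eq_single i₀ (fun i hi hne => ?_) (fun h => absurd hi₀ h),
    coeff_monomial, if_pos hτi₀]
  · exact hc
  · rw [coeff_monomial, if_neg (mt (hT i hi) hne)]

end Polynomial

theorem AddMonoidHom.exists_zsmul_eq_of_mem_zmultiples {A Γ : Type*} [AddCommGroup A]
    [AddCommGroup Γ] [LinearOrder Γ] [IsOrderedAddMonoid Γ] {φ : A →+ Γ} (hφ : Injective φ)
    (c : Γ) : ∃ v : A, 0 ≤ φ v ∧ ∀ u, φ u ∈ AddSubgroup.zmultiples c → ∃ t : ℤ, t • v = u := by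
  set K := (AddSubgroup.zmultiples c).comap φ
  let ψ : K →+ AddSubgroup.zmultiples c := (φ.comp K.subtype).codRestrict _ fun x => x.2
  have : IsAddCyclic K := isAddCyclic_of_injective ψ
    fun x y hxy => Subtype.ext (hφ (congrArg Subtype.val hxy :))
  obtain ⟨g, hg⟩ := IsAddCyclic.exists_generator (α := K)
  rcases le_total 0 (φ g) with hg0 | hg0
  · refine ⟨g, hg0, fun u hu => ?_⟩
    obtain ⟨t, ht⟩ := hg ⟨u, hu⟩
    exact ⟨t, congrArg Subtype.val ht⟩
  · refine ⟨-g, by simpa using hg0, fun u hu => ?_⟩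
    obtain ⟨t, ht⟩ := hg ⟨u, hu⟩
    exact ⟨-t, by simpa using congrArg Subtype.val ht⟩

namespace Finsupp

abbrev natCastHom (σ : Type*) : (σ →₀ ℕ) →+ (σ →₀ ℤ) :=
  mapRange.addMonoidHom (Nat.castAddMonoidHom ℤ)

theorem natCastHom_injective (σ : Type*) : Injective (natCastHom σ) :=
  mapRange_injective _ Nat.cast_zero Nat.cast_injective

theorem exists_natCastHom_sub_eq {σ : Type*} (v : σ →₀ ℤ) :
    ∃ a b : σ →₀ ℕ, natCastHom σ a - natCastHom σ b = v :=
  ⟨v.mapRange Int.toNat rfl, (-v).mapRange Int.toNat rfl, by ext j; simp⟩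

end Finsupp

open Finsupp

/-- `α + τ α • b = α₀ + τ α • a` encodes `α = α₀ + τ α • (a - b)` without subtracting in
`σ →₀ ℕ`. -/
theorem exists_segment_of_mem_zmultiples {σ : Type*} {φ : (σ →₀ ℤ) →+ ℝ} (hφ : Injective φ)
    {c : ℝ} {S : Finset (σ →₀ ℕ)} (hS : 2 < S.card)
    (hSc : ∀ α ∈ S, φ (natCastHom σ α) ∈ AddSubgroup.zmultiples c) :
    ∃ α₀ ∈ S, ∃ α₂ ∈ S, ∃ (a b : σ →₀ ℕ) (T : ℕ) (τ : (σ →₀ ℕ) → ℕ),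
      2 ≤ T ∧ φ (natCastHom σ b) < φ (natCastHom σ a) ∧ τ α₂ = T ∧
      ∀ α ∈ S, τ α ≤ T ∧ α + τ α • b = α₀ + τ α • a := by
  set e := natCastHom σ
  have he := natCastHom_injective σ
  obtain ⟨α₀, hα₀, hα₀_min⟩ := S.exists_min_image (φ ∘ e) (Finset.card_pos.mp (by omega))
  obtain ⟨v, hv0, hv⟩ := φ.exists_zsmul_eq_of_mem_zmultiples hφ c
  have hv' : ∀ α ∈ S, ∃ t : ℤ, t • v = e α - e α₀ := fun α hα =>
    hv _ (by rw [map_sub]; exact sub_mem (hSc α hα) (hSc α₀ hα₀))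
  have hv_pos : 0 < φ v := by
    obtain ⟨α₁, hα₁, hne⟩ := S.exists_mem_ne (by omega) α₀
    refine hv0.lt_of_ne fun h => hne (he ?_)
    obtain ⟨t, ht⟩ := hv' α₁ hα₁
    rw [← sub_eq_zero, ← ht, hφ (h.symm.trans φ.map_zero.symm), smul_zero]
  have hline : ∀ α ∈ S, ∃ t : ℕ, e α = e α₀ + t • v := by
    intro α hα
    obtain ⟨t, ht⟩ := hv' α hα
    have hφt : t * φ v = φ (e α) - φ (e α₀) := by
      rw [← map_sub, ← ht, map_zsmul, zsmul_eq_mul]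
    have ht0 : 0 ≤ t := by
      have := hα₀_min α hα
      simp only [comp_apply] at this
      exact_mod_cast nonneg_of_mul_nonneg_left (a := (t : ℝ)) (by linarith) hv_pos
    refine ⟨t.toNat, ?_⟩
    rw [← natCast_zsmul, Int.toNat_of_nonneg ht0, ht]
    abel
  choose! τ hτ using hline
  obtain ⟨α₂, hα₂, hα₂_max⟩ := S.exists_max_image τ (Finset.card_pos.mp (by omega))
  have hT : 2 ≤ τ α₂ := by
    have hinj : Set.InjOn τ S := fun α hα β hβ h =>
      he (by rw [hτ α hα, hτ β hβ, h])
    have := Finset.card_le_card_of_injOn τ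
      (fun α hα => Finset.mem_range.mpr (Nat.lt_succ_of_le (hα₂_max α hα))) hinj
    rw [Finset.card_range] at this
    omega
  obtain ⟨a, b, hab⟩ := exists_natCastHom_sub_eq v
  refine ⟨α₀, hα₀, α₂, hα₂, a, b, τ α₂, τ, hT, ?_, rfl, fun α hα => ⟨hα₂_max α hα, he ?_⟩⟩
  · rw [← sub_pos, ← map_sub, hab]; exact hv_pos
  · rw [map_add, map_add, map_nsmul, map_nsmul, hτ α hα, ← hab, smul_sub]
    abel

open Complex in
theorem linearCombination_mem_zmultiples_of_eval_eq {σ : Type*} {p : MvPolynomial σ ℂ}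
    {ℓ : σ → ℝ} {Δ : ℝ} (hΔ : Δ ≠ 0)
    (h : ∀ z, MvPolynomial.eval z p = MvPolynomial.eval (fun k => exp (I * Δ * ℓ k) * z k) p)
    {α : σ →₀ ℕ} (hα : α ∈ p.support) :
    linearCombination ℤ ℓ (natCastHom σ α) ∈ AddSubgroup.zmultiples (2 * Real.pi / Δ) := by
  set W := linearCombination ℤ ℓ (natCastHom σ α)
  have hW : W = α.sum fun k n => (n : ℝ) * ℓ k := by
    simp [W, linearCombination_apply, sum_mapRange_index]
  have hexp : exp (I * Δ * W) = 1 := by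
    rw [← MvPolynomial.prod_pow_eq_one_of_eval_mul_eq h hα, hW]
    simp only [Finsupp.prod, Finsupp.sum, ofReal_sum, Finset.mul_sum, exp_sum]
    refine Finset.prod_congr rfl fun k _ => ?_
    rw [← exp_nat_mul]
    push_cast
    ring_nf
  obtain ⟨m, hm⟩ := exp_eq_one_iff.mp hexp
  refine AddSubgroup.mem_zmultiples_iff.mpr ⟨m, ?_⟩
  have : Δ * W = m * (2 * Real.pi) := by
    apply ofReal_injective
    apply mul_left_cancel₀ I_ne_zero
    push_cast
    linear_combination hm
  rw [zsmul_eq_mul]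
  field_simp
  linarith

namespace MvPolynomial

theorem monomial_mul_eq_monomial_mul_aeval_homogenize {σ R : Type*} [CommSemiring R]
    {p : MvPolynomial σ R} {τ : (σ →₀ ℕ) → ℕ} {T : ℕ} {α₀ a b : σ →₀ ℕ}
    (hp : ∀ α ∈ p.support, τ α ≤ T ∧ α + τ α • b = α₀ + τ α • a) :
    monomial (T • b) 1 * p = monomial α₀ 1 * aeval ![monomial a 1, monomial b 1]
      ((∑ α ∈ p.support, Polynomial.monomial (τ α) (coeff α p)).homogenize T) := by
  conv_lhs => rw [p.as_sum]
  rw [Polynomial.homogenize_finsetSum, map_sum, Finset.mul_sum, Finset.mul_sum]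
  refine Finset.sum_congr rfl fun α hα => ?_
  obtain ⟨hle, heq⟩ := hp α hα
  rw [Polynomial.homogenize_monomial hle, aeval_monomial, monomial_mul,
    Finsupp.prod_fintype _ _ (by simp)]
  simp only [algebraMap_eq, Fin.prod_univ_two, Finsupp.coe_update, Matrix.cons_val_zero,
    Matrix.cons_val_one, Matrix.cons_val_fin_one, Function.update_self,
    Function.update_of_ne zero_ne_one, Finsupp.single_eq_same, monomial_pow, one_pow,
    monomial_mul, mul_one]
  rw [C_mul_monomial, monomial_mul, mul_one, one_mul]
  obtain ⟨k, rfl⟩ := Nat.exists_eq_add_of_le hle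
  rw [Nat.add_sub_cancel_left]
  congr 2
  calc (τ α + k) • b + α = (α + τ α • b) + k • b := by rw [add_nsmul]; abel
    _ = α₀ + (τ α • a + k • b) := by rw [heq, add_assoc]

theorem exists_monomial_mul_eq_C_mul_prod {σ K : Type*} [Field K] [IsAlgClosed K]
    {p : MvPolynomial σ K} {τ : (σ →₀ ℕ) → ℕ} {T : ℕ} {α₀ α₂ a b : σ →₀ ℕ}
    (hp : ∀ α ∈ p.support, τ α ≤ T ∧ α + τ α • b = α₀ + τ α • a) (hα₂ : α₂ ∈ p.support)
    (hτα₂ : τ α₂ = T) :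
    ∃ (u : K) (M : Multiset K), monomial (T • b) 1 * p =
      C u * (monomial α₀ 1 ::ₘ M.map fun ρ => monomial a 1 - monomial b ρ).prod := by
  set f := ∑ α ∈ p.support, Polynomial.monomial (τ α) (coeff α p)
  have hf : f.natDegree = T :=
    Polynomial.natDegree_sum_monomial_eq hα₂ (mem_support_iff.mp hα₂) (fun α hα => (hp α hα).1)
      (fun α hα hα' => add_right_cancel (b := T • b) <| by
        rw [← hα', (hp α hα).2, hα', ← hτα₂, (hp α₂ hα₂).2]) hτα₂
  refine ⟨f.leadingCoeff, f.roots, ?_⟩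
  rw [monomial_mul_eq_monomial_mul_aeval_homogenize hp, ← hf,
    (IsAlgClosed.splits f).homogenize_natDegree_eq_prod_roots]
  simp only [aeval_eq_bind₁, map_mul, algHom_C, algebraMap_eq, map_multiset_prod,
    Multiset.map_map, comp_apply, map_sub, bind₁_X_right, Matrix.cons_val_zero,
    Matrix.cons_val_one, Matrix.cons_val_fin_one, C_mul_monomial, mul_one, Multiset.prod_cons]
  exact mul_left_comm _ _ _

theorem card_support_le_two_of_prime {σ K : Type*} [Field K] [IsAlgClosed K]
    {q : MvPolynomial σ K} (hq : Prime q) {φ : (σ →₀ ℤ) →+ ℝ} (hφ : Injective φ) {c : ℝ}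
    (hc : ∀ α ∈ q.support, φ (natCastHom σ α) ∈ AddSubgroup.zmultiples c) :
    q.support.card ≤ 2 := by
  classical
  by_contra! h3
  obtain ⟨α₀, hα₀, α₂, hα₂, a, b, T, τ, hT, hba, hτα₂, hτ⟩ :=
    exists_segment_of_mem_zmultiples hφ h3 hc
  obtain ⟨u, M, hfactor⟩ := exists_monomial_mul_eq_C_mul_prod hτ hα₂ hτα₂
  set P := (monomial α₀ 1 ::ₘ M.map fun ρ => monomial a 1 - monomial b ρ).prod
  have hlhs : monomial (T • b) 1 * q ≠ 0 :=
    mul_ne_zero (monomial_eq_zero.not.mpr one_ne_zero) hq.ne_zero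
  have hP : P ≠ 0 := right_ne_zero_of_mul (hfactor ▸ hlhs)
  have hqP : q ∣ P := by
    have hu : IsUnit (C u : MvPolynomial σ K) :=
      (IsUnit.mk0 _ fun h => hlhs (by rw [hfactor, h, map_zero, zero_mul])).map C
    exact hu.dvd_mul_left.mp (hfactor ▸ dvd_mul_left q _)
  obtain ⟨r, hr, hqr⟩ := hq.exists_mem_multiset_dvd hqP
  set F := φ.comp (natCastHom σ)
  have hba : F b < F a := hba
  have hrB : ∀ y₁ ∈ r.support, ∀ y₂ ∈ r.support, F y₂ ≤ F y₁ + (F a - F b) := by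
    rcases Multiset.mem_cons.mp hr with rfl | hr
    · intro y₁ hy₁ y₂ hy₂
      rw [Finset.mem_singleton.mp (support_monomial_subset hy₁),
        Finset.mem_singleton.mp (support_monomial_subset hy₂)]
      linarith
    · obtain ⟨ρ, -, rfl⟩ := Multiset.mem_map.mp hr
      have hsupp : ∀ y ∈ (monomial a 1 - monomial b ρ).support, y = a ∨ y = b := fun y hy => by
        simpa using (support_sub _ _ _).trans
          (Finset.union_subset_union support_monomial_subset support_monomial_subset) hy
      intro y₁ hy₁ y₂ hy₂
      rcases hsupp y₁ hy₁ with rfl | rfl <;> rcases hsupp y₂ hy₂ with rfl | rfl <;> linarith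
  have hspread := le_add_of_dvd (hφ.comp (natCastHom_injective σ)) (fun h => hP
    (Multiset.prod_eq_zero (h ▸ hr))) hqr hrB hα₀ hα₂
  have hline := congrArg F (hτ α₂ hα₂).2
  simp only [map_add, map_nsmul, hτα₂, nsmul_eq_mul] at hline
  have hT' : (2 : ℝ) ≤ T := by exact_mod_cast hT
  nlinarith [mul_le_mul_of_nonneg_right hT' (sub_nonneg.mpr hba.le)]

theorem one_lt_card_support_of_irreducible {σ K : Type*} [Field K] {p : MvPolynomial σ K}
    (hp : Irreducible p) (h0 : coeff 0 p ≠ 0) : 1 < p.support.card := by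
  have h0' : 0 ∈ p.support := mem_support_iff.mpr h0
  refine lt_of_le_of_ne (Finset.card_pos.mpr ⟨0, h0'⟩) fun h1 => hp.not_isUnit ?_
  obtain ⟨α, hα⟩ := Finset.card_eq_one.mp h1.symm
  rw [hα, Finset.mem_singleton] at h0'
  rw [p.as_sum, hα, ← h0', Finset.sum_singleton, monomial_zero']
  exact (IsUnit.mk0 _ h0).map C

end MvPolynomial

theorem LeeYang.coeff_zero_ne_zero {n : ℕ} {p : MvPolynomial (Fin n) ℂ} (hp : LeeYang p) :
    MvPolynomial.coeff 0 p ≠ 0 := by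
  simpa [MvPolynomial.eval_zero, MvPolynomial.constantCoeff_eq] using hp.1 0 (by simp)

theorem stmt_10_general {n : ℕ} (q : MvPolynomial (Fin n) ℂ) (hq : LeeYang q)
    (hirr : Irreducible q)
    (ℓ : Fin n → ℝ) (hind : LinearIndependent ℚ ℓ)
    (Δ : ℝ) (hΔ : 0 < Δ)
    (h : ∀ z : Fin n → ℂ,
      MvPolynomial.eval z q =
        MvPolynomial.eval (fun k => Complex.exp (Complex.I * (Δ : ℂ) * (ℓ k : ℂ)) * z k) q) :
    q.support.card = 2 := by
  have hφ : Injective (linearCombination ℤ ℓ).toAddMonoidHom :=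
    (hind.restrict_scalars' ℤ).finsuppLinearCombination_injective
  have hle := MvPolynomial.card_support_le_two_of_prime hirr.prime hφ
    fun α hα => linearCombination_mem_zmultiples_of_eval_eq hΔ.ne' h hα
  have hlt := MvPolynomial.one_lt_card_support_of_irreducible hirr hq.coeff_zero_ne_zero
  omega

/-- If an irreducible Lee-Yang polynomial `q` satisfies
`q(z) = q(e^{iΔℓ_1}z_1,…,e^{iΔℓ_n}z_n)` for all `z ∈ ℂ^n`, where `Δ > 0` and `ℓ` has
positive `ℚ`-linearly independent entries, then `q` is a binomial (exactly two monomials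
with nonzero coefficients). -/
theorem stmt_10 {n : ℕ} (q : MvPolynomial (Fin n) ℂ) (hq : LeeYang q)
    (hirr : Irreducible q)
    (ℓ : Fin n → ℝ) (hl : ∀ j, 0 < ℓ j) (hind : LinearIndependent ℚ ℓ)
    (Δ : ℝ) (hΔ : 0 < Δ)
    (h : ∀ z : Fin n → ℂ,
      MvPolynomial.eval z q =
        MvPolynomial.eval (fun k => Complex.exp (Complex.I * (Δ : ℂ) * (ℓ k : ℂ)) * z k) q) :
    q.support.card = 2 :=
  stmt_10_general q hq hirr ℓ hind Δ hΔ h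
end
end

section
/- Let p ∈ LY_d(n) be a binomial (exactly two monomials with nonzero coefficients) normalized so that p(0,…,0) = 1. Then there exists φ ∈ ℝ such that p(z_1,…,z_n) = 1 − e^{−iφ} z_1^{d_1}⋯z_n^{d_n}. Consequently, for every ℓ ∈ ℝ^n with all entries positive, every zero of f_{p,ℓ} has multiplicity 1 and the zero set of f_{p,ℓ} equals the arithmetic progression {(φ + 2πk)/⟨d,ℓ⟩ : k ∈ ℤ}. -/
open MeasureTheory Filter Topology

noncomputable section

/-!
A binomial with constant term `1` is `1 + c z^d`. On the diagonal `z = (w, …, w)` it vanishes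
where `w^{∑ d_j} = -1/c`, i.e. at `‖w‖ = ‖c‖^{-1/∑ d_j}`; the Lee-Yang condition excludes both
`‖w‖ < 1` and `‖w‖ > 1`, so `‖c‖ = 1` and `-c = e^{-iφ}`. Then
`f_{p,ℓ}(x) = 1 - e^{i(x⟨d,ℓ⟩ - φ)}`, whose zeros are the points `x⟨d,ℓ⟩ - φ ∈ 2πℤ`, and its
derivative there is `-i⟨d,ℓ⟩ ≠ 0`.
-/

open MvPolynomial Complex

theorem MvPolynomial.exists_eq_one_add_C_mul_prod_X_pow {σ R : Type*} [Fintype σ]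
    [CommSemiring R] {p : MvPolynomial σ R} {d : σ → ℕ} (hdeg : ∀ j, p.degreeOf j = d j)
    (hcard : p.support.card = 2) (h0 : coeff 0 p = 1) :
    ∃ c ≠ 0, d ≠ 0 ∧ p = 1 + C c * ∏ j, X j ^ d j := by
  classical
  have : Nontrivial R := by
    obtain ⟨m, hm⟩ := Finset.card_pos.1 (hcard ▸ two_pos : 0 < p.support.card)
    exact nontrivial_of_ne _ _ (mem_support_iff.1 hm)
  have h0mem : 0 ∈ p.support := by
    rw [mem_support_iff, h0]
    exact one_ne_zero
  obtain ⟨a, ha⟩ := Finset.card_eq_one.1 (by rw [Finset.card_erase_of_mem h0mem, hcard])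
  have hsupp : p.support = {0, a} := by rw [← Finset.insert_erase h0mem, ha]
  have ha0 : a ≠ 0 := Finset.ne_of_mem_erase (ha ▸ Finset.mem_singleton_self a)
  have had : ⇑a = d := _root_.funext fun j => by rw [← hdeg, degreeOf_eq_sup, hsupp]; simp
  refine ⟨coeff a p, by simp [← mem_support_iff, hsupp],
    by rwa [← had, Ne, Finsupp.coe_eq_zero], ?_⟩
  conv_lhs => rw [p.as_sum, hsupp, Finset.sum_pair ha0.symm]
  rw [h0, monomial_zero', C_1, monomial_eq, Finsupp.prod_fintype a _ fun _ => pow_zero _, had]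

theorem norm_eq_one_of_leeYang {n : ℕ} {c : ℂ} {d : Fin n → ℕ}
    (hp : LeeYang (1 + C c * ∏ j, X j ^ d j)) (hc : c ≠ 0) (hd : d ≠ 0) : ‖c‖ = 1 := by
  have hD : ∑ j, d j ≠ 0 := by simpa [Finset.sum_eq_zero_iff, _root_.funext_iff] using hd
  obtain ⟨w, hw⟩ := IsAlgClosed.exists_pow_nat_eq (-c⁻¹) (Nat.pos_of_ne_zero hD)
  have hroot : eval (fun _ => w) (1 + C c * ∏ j, X j ^ d j) = 0 := by
    simp [Finset.prod_pow_eq_pow_sum, hw, hc]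
  have hw_norm : ‖w‖ ^ ∑ j, d j = ‖c‖⁻¹ := by rw [← norm_pow, hw, norm_neg, norm_inv]
  rcases lt_trichotomy ‖c‖ 1 with h | h | h
  · refine absurd hroot (hp.2 _ fun _ => (one_lt_pow_iff_of_nonneg (norm_nonneg w) hD).1 ?_)
    rw [hw_norm]
    exact one_lt_inv₀ (norm_pos_iff.2 hc) |>.2 h
  · exact h
  · refine absurd hroot (hp.1 _ fun _ => (pow_lt_one_iff_of_nonneg (norm_nonneg w) hD).1 ?_)
    rw [hw_norm]
    exact inv_lt_one_of_one_lt₀ h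

theorem fpl_one_sub_C_mul_prod_X_pow {n : ℕ} (b : ℂ) (d : Fin n → ℕ) (ℓ : Fin n → ℝ) (x : ℂ) :
    fpl (1 - C b * ∏ j, X j ^ d j) ℓ x = 1 - b * exp (I * x * ↑(∑ j, (d j : ℝ) * ℓ j)) := by
  simp only [fpl, map_sub, map_one, map_mul, eval_C, eval_prod, map_pow, eval_X, ← exp_nat_mul,
    ← exp_sum]
  push_cast
  rw [Finset.mul_sum]
  congr 4 with j
  ring

theorem hasDerivAt_fpl_one_sub_C_mul_prod_X_pow {n : ℕ} (b : ℂ) (d : Fin n → ℕ) (ℓ : Fin n → ℝ)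
    (x : ℂ) :
    HasDerivAt (fpl (1 - C b * ∏ j, X j ^ d j) ℓ)
      (-(b * (exp (I * x * ↑(∑ j, (d j : ℝ) * ℓ j)) * (I * ↑(∑ j, (d j : ℝ) * ℓ j))))) x := by
  rw [_root_.funext (fpl_one_sub_C_mul_prod_X_pow b d ℓ)]
  refine (HasDerivAt.cexp ?_).const_mul b |>.const_sub 1
  simpa using ((hasDerivAt_id x).const_mul I).mul_const _

theorem Complex.exists_exp_neg_I_mul_eq {u : ℂ} (hu : ‖u‖ = 1) : ∃ φ : ℝ, exp (-(I * φ)) = u := by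
  obtain ⟨θ, hθ⟩ := (norm_eq_one_iff u).1 hu
  exact ⟨-θ, by rw [ofReal_neg, mul_neg, neg_neg, mul_comm, hθ]⟩

theorem Complex.one_sub_exp_neg_mul_exp_eq_zero_iff {φ L t : ℝ} (hL : L ≠ 0) :
    1 - exp (-(I * φ)) * exp (I * t * L) = 0 ↔ ∃ k : ℤ, t = (φ + 2 * Real.pi * k) / L := by
  rw [sub_eq_zero, ← exp_add, eq_comm, ← exp_zero, exp_eq_exp_iff_exists_int]
  refine exists_congr fun k => ?_
  have h : -(I * φ) + I * t * L - (0 + k * (2 * Real.pi * I))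
      = I * ((t * L - (φ + 2 * Real.pi * k) : ℝ) : ℂ) := by push_cast; ring
  rw [← sub_eq_zero, h, mul_eq_zero, ofReal_eq_zero, sub_eq_zero, eq_div_iff hL]
  simp [I_ne_zero]

theorem mult_eq_one_of_hasDerivAt {n : ℕ} {p : MvPolynomial (Fin n) ℂ} {ℓ : Fin n → ℝ} {t : ℝ}
    {f' : ℂ} (h0 : fpl p ℓ t = 0) (hf : HasDerivAt (fpl p ℓ) f' t) (hf' : f' ≠ 0) :
    mult p ℓ t = 1 := by
  have h1 : 1 ∈ {k : ℕ | iteratedDeriv k (fpl p ℓ) t ≠ 0} := by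
    simpa [iteratedDeriv_one, hf.deriv] using hf'
  refine le_antisymm (Nat.sInf_le h1) (Nat.one_le_iff_ne_zero.2 fun h => ?_)
  have h0' := Nat.sInf_mem ⟨1, h1⟩
  rw [← mult, h, Set.mem_ofPred_eq, iteratedDeriv_zero] at h0'
  exact h0' h0

theorem stmt_15_general {n : ℕ} (d : Fin n → ℕ)
    (p : MvPolynomial (Fin n) ℂ) (hp : LeeYang p) (hdeg : ∀ j, p.degreeOf j = d j)
    (hbin : p.support.card = 2)
    (hnorm : MvPolynomial.eval (fun _ => (0 : ℂ)) p = 1) :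
    ∃ φ : ℝ,
      p = 1 - MvPolynomial.C (Complex.exp (-(Complex.I * (φ : ℂ)))) *
            ∏ j, MvPolynomial.X j ^ d j ∧
      ∀ ℓ : Fin n → ℝ, (∀ j, 0 < ℓ j) →
        (∀ t : ℝ, fpl p ℓ t = 0 → mult p ℓ t = 1) ∧
        {t : ℝ | fpl p ℓ t = 0} =
          {t : ℝ | ∃ k : ℤ, t = (φ + 2 * Real.pi * k) / (∑ j, (d j : ℝ) * ℓ j)} := by
  obtain ⟨c, hc, hd, rfl⟩ := exists_eq_one_add_C_mul_prod_X_pow hdeg hbin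
    (by rwa [eval_zero', constantCoeff_eq] at hnorm)
  obtain ⟨φ, hφ⟩ := exists_exp_neg_I_mul_eq (by rw [norm_neg, norm_eq_one_of_leeYang hp hc hd])
  have hq : (1 + C c * ∏ j, X j ^ d j : MvPolynomial (Fin n) ℂ)
      = 1 - C (exp (-(I * φ))) * ∏ j, X j ^ d j := by
    rw [hφ, map_neg]
    ring
  refine ⟨φ, hq, fun ℓ hℓ => ?_⟩
  have hL : ∑ j, (d j : ℝ) * ℓ j ≠ 0 := by
    obtain ⟨j, hj⟩ := Function.ne_iff.1 hd
    refine (Finset.sum_pos' (fun j _ => mul_nonneg (Nat.cast_nonneg _) (hℓ j).le)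
      ⟨j, Finset.mem_univ j, ?_⟩).ne'
    exact mul_pos (by exact_mod_cast Nat.pos_of_ne_zero hj) (hℓ j)
  rw [hq]
  refine ⟨fun t ht => mult_eq_one_of_hasDerivAt ht
    (hasDerivAt_fpl_one_sub_C_mul_prod_X_pow _ d ℓ t) ?_, Set.ext fun t => ?_⟩
  · simpa [I_ne_zero, exp_ne_zero] using ofReal_ne_zero.2 hL
  · rw [Set.mem_ofPred_eq, fpl_one_sub_C_mul_prod_X_pow]
    exact one_sub_exp_neg_mul_exp_eq_zero_iff hL

/-- A binomial `p ∈ LY_d(n)` with `p(0,…,0) = 1` has the form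
`p(z) = 1 − e^{−iφ} z_1^{d_1}⋯z_n^{d_n}` for some `φ ∈ ℝ`; consequently, for every positive
`ℓ`, every zero of `f_{p,ℓ}` is simple and the zero set is the arithmetic progression
`{(φ + 2πk)/⟨d,ℓ⟩ : k ∈ ℤ}`. -/
theorem stmt_15 {n : ℕ} (d : Fin n → ℕ) (hd : ∀ j, 1 ≤ d j)
    (p : MvPolynomial (Fin n) ℂ) (hp : LeeYang p) (hdeg : ∀ j, p.degreeOf j = d j)
    (hbin : p.support.card = 2)
    (hnorm : MvPolynomial.eval (fun _ => (0 : ℂ)) p = 1) :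
    ∃ φ : ℝ,
      p = 1 - MvPolynomial.C (Complex.exp (-(Complex.I * (φ : ℂ)))) *
            ∏ j, MvPolynomial.X j ^ d j ∧
      ∀ ℓ : Fin n → ℝ, (∀ j, 0 < ℓ j) →
        (∀ t : ℝ, fpl p ℓ t = 0 → mult p ℓ t = 1) ∧
        {t : ℝ | fpl p ℓ t = 0} =
          {t : ℝ | ∃ k : ℤ, t = (φ + 2 * Real.pi * k) / (∑ j, (d j : ℝ) * ℓ j)} :=
  stmt_15_general d p hp hdeg hbin hnorm
end
end

section
/- Let 0 ≤ m ≤ n − 2, let B ∈ ℤ^{n×m} be an integer matrix of rank m, let H = {exp(By) : y ∈ ℂ^m} ⊂ (ℂ*)^n (coordinatewise exponential), let z₀ = exp(x₀) ∈ (ℂ*)^n for some x₀ ∈ ℂ^n, and let ℓ ∈ ℝ^n have entries that are linearly independent over ℚ. Then there is at most one k ∈ ℝ such that (e^{ikℓ_1},…,e^{ikℓ_n}) ∈ z₀H, where z₀H = {exp(x₀ + By) : y ∈ ℂ^m}. -/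
/-!
If `e^{ikℓ}` and `e^{ik'ℓ}` both lie in `z₀H`, dividing the two points gives an element of `H`:
for each `j`, `(k - k') ℓ_j = ∑ᵢ B_{ji} uᵢ + 2π c_j` with `u` real and `c_j ∈ ℤ`. If `k ≠ k'`,
every `ℓ_j` is thus a `ℚ`-combination of the `m + 1` reals `uᵢ/(k - k')` and `2π/(k - k')`,
and `n ≥ m + 2` such numbers are `ℚ`-linearly dependent.
-/

open Complex Finset

lemma Complex.exists_int_sub_eq_im_sub_add_of_exp_eq {a a' : ℝ} {w w' : ℂ}
    (h : exp (I * a) = exp w) (h' : exp (I * a') = exp w') :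
    ∃ c : ℤ, a - a' = (w - w').im + c * (2 * Real.pi) := by
  have hexp : exp (I * (a - a' : ℝ)) = exp (w - w') := by
    rw [exp_sub, ← h, ← h', ← exp_sub]
    push_cast
    ring_nf
  obtain ⟨c, hc⟩ := exp_eq_exp_iff_exists_int.mp hexp
  refine ⟨c, ?_⟩
  simpa using congrArg im hc

-- The `card ι` vectors `(c j, B j) ∈ ℚ^(Option κ)` satisfy a nontrivial relation, which `hv`
-- transports to the `v j`.
lemma not_linearIndependent_of_eq_sum_mul_add_mul {ι κ : Type*} [Fintype ι] [Fintype κ]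
    (hcard : Fintype.card κ + 1 < Fintype.card ι) (B : ι → κ → ℚ) (c : ι → ℚ)
    (u : κ → ℝ) (t : ℝ) (v : ι → ℝ) (hv : ∀ j, v j = ∑ i, (B j i : ℝ) * u i + c j * t) :
    ¬ LinearIndependent ℚ v := by
  intro hind
  let w : ι → Option κ → ℚ := fun j o => o.elim (c j) (B j)
  have hw : ¬ LinearIndependent ℚ w := fun hw => by
    have := hw.fintype_card_le_finrank
    simp only [Module.finrank_fintype_fun_eq_card, Fintype.card_option] at this
    omega
  obtain ⟨q, hq, j₀, hj₀⟩ := Fintype.not_linearIndependent_iff.mp hw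
  have hqB : ∀ i, ∑ j, (q j : ℝ) * B j i = 0 := fun i => by
    exact_mod_cast by simpa [w] using congrFun hq (some i)
  have hqc : ∑ j, (q j : ℝ) * c j = 0 := by
    exact_mod_cast by simpa [w] using congrFun hq none
  have hqv : ∑ j, q j • v j = 0 := calc
    ∑ j, q j • v j
        = ∑ i, (∑ j, (q j : ℝ) * B j i) * u i + (∑ j, (q j : ℝ) * c j) * t := by
      simp only [hv, Rat.smul_def, mul_add, sum_add_distrib, mul_sum, sum_mul]
      rw [sum_comm]
      congr 1 <;> refine sum_congr rfl fun _ _ => ?_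
      · exact sum_congr rfl fun _ _ => by ring
      · ring
    _ = 0 := by simp [hqB, hqc]
  exact hj₀ (Fintype.linearIndependent_iff.mp hind q hqv j₀)

theorem stmt_18_general {n m : ℕ} (hm : m + 2 ≤ n)
    (B : Matrix (Fin n) (Fin m) ℤ)
    (x₀ : Fin n → ℂ)
    (ℓ : Fin n → ℝ) (hind : LinearIndependent ℚ ℓ)
    (k k' : ℝ)
    (hk : ∃ y : Fin m → ℂ, ∀ j : Fin n,
      Complex.exp (Complex.I * (k : ℂ) * (ℓ j : ℂ)) =
        Complex.exp (x₀ j + ∑ i, (B j i : ℂ) * y i))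
    (hk' : ∃ y : Fin m → ℂ, ∀ j : Fin n,
      Complex.exp (Complex.I * (k' : ℂ) * (ℓ j : ℂ)) =
        Complex.exp (x₀ j + ∑ i, (B j i : ℂ) * y i)) :
    k = k' := by
  by_contra hne
  have hd : k - k' ≠ 0 := sub_ne_zero.mpr hne
  obtain ⟨y, hy⟩ := hk
  obtain ⟨y', hy'⟩ := hk'
  have hjump : ∀ j, ∃ c : ℤ,
      (k - k') * ℓ j = ∑ i, (B j i : ℝ) * (y i - y' i).im + c * (2 * Real.pi) := fun j => by
    obtain ⟨c, hc⟩ := exists_int_sub_eq_im_sub_add_of_exp_eq (a := k * ℓ j) (a' := k' * ℓ j)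
      (w := x₀ j + ∑ i, (B j i : ℂ) * y i) (w' := x₀ j + ∑ i, (B j i : ℂ) * y' i)
      (by push_cast; rw [← mul_assoc, hy j]) (by push_cast; rw [← mul_assoc, hy' j])
    refine ⟨c, ?_⟩
    rw [sub_mul, hc, add_sub_add_left_eq_sub, ← sum_sub_distrib, im_sum]
    simp [mul_sub]
  choose c hc using hjump
  refine not_linearIndependent_of_eq_sum_mul_add_mul (by simp only [Fintype.card_fin]; omega)
    (fun j i => B j i) (fun j => c j) (fun i => (y i - y' i).im / (k - k')) (2 * Real.pi / (k - k')) ℓ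
    (fun j => ?_) hind
  have hℓ : ℓ j = (∑ i, (B j i : ℝ) * (y i - y' i).im + c j * (2 * Real.pi)) / (k - k') :=
    eq_div_of_mul_eq hd (by rw [mul_comm, hc j])
  rw [hℓ, add_div, sum_div]
  push_cast
  simp only [mul_div_assoc]

/-- Let `0 ≤ m ≤ n − 2`, let `B ∈ ℤ^{n×m}` have rank `m` (its columns
are linearly independent over `ℚ`), let `z₀H = {exp(x₀ + By) : y ∈ ℂ^m}` be a coset of the
algebraic torus `H = {exp(By) : y ∈ ℂ^m} ⊆ (ℂ*)^n`, and let `ℓ ∈ ℝ^n` have `ℚ`-linearly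
independent entries. Then there is at most one `k ∈ ℝ` with
`(e^{ikℓ_1},…,e^{ikℓ_n}) ∈ z₀H`. -/
theorem stmt_18 {n m : ℕ} (hm : m + 2 ≤ n)
    (B : Matrix (Fin n) (Fin m) ℤ)
    (hB : LinearIndependent ℚ (fun i : Fin m => fun j : Fin n => (B j i : ℚ)))
    (x₀ : Fin n → ℂ)
    (ℓ : Fin n → ℝ) (hind : LinearIndependent ℚ ℓ)
    (k k' : ℝ)
    (hk : ∃ y : Fin m → ℂ, ∀ j : Fin n,
      Complex.exp (Complex.I * (k : ℂ) * (ℓ j : ℂ)) =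
        Complex.exp (x₀ j + ∑ i, (B j i : ℂ) * y i))
    (hk' : ∃ y : Fin m → ℂ, ∀ j : Fin n,
      Complex.exp (Complex.I * (k' : ℂ) * (ℓ j : ℂ)) =
        Complex.exp (x₀ j + ∑ i, (B j i : ℂ) * y i)) :
    k = k' :=
  stmt_18_general hm B x₀ ℓ hind k k' hk hk'
end
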